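/- arXiv:1609.04368 — 2 statements merged into one kernel-verified Lean document; each statement's English description precedes it below -/
import Mathlib

section
/- Let h ∈ ℝ and define f(s) = E_{Z'}[(E_Z[sign(h + √s Z' + √(1−s) Z)])²] for s ∈ (0,1), where Z, Z' are independent standard Gaussians. Then f is differentiable with f'(s) = (2/(π√(1−s²))) exp(−h²/(1+s)). -/
/-!
With `sgnMean w := 𝔼[sgn (w + Z)] = 1 - 2 Φ(-w)`, the inner expectation is
`sgnMean (a u * z' + b u)` for `a u = √u / √(1 - u)` and `b u = h / √(1 - u)`. Since
`sgnMean' = 2 φ` is bounded, the outer expectation of `sgnMean (a u Z' + b u) ^ 2` may be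
differentiated under the integral sign. The chain-rule factor `a' z + b'` is proportional to
`(1 + a²) z + a b`, minus the logarithmic derivative of `z ↦ φ (a z + b) φ z`, so Gaussian
integration by parts turns the derivative into `4 / (1 - s) · 𝔼[φ (a Z + b) ^ 2]`, a Gaussian
integral evaluated by completing the square.
-/

open MeasureTheory Real ProbabilityTheory

noncomputable def sgn (a : ℝ) : ℝ := if 0 ≤ a then 1 else -1

open Set Filter Topology
open scoped NNReal

namespace GaussianSignCorrelation

local notation "𝒩" => gaussianReal 0 1
local notation "φ" => gaussianPDFReal 0 1

@[fun_prop]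
lemma continuous_gaussianPDFReal (m : ℝ) (v : ℝ≥0) : Continuous (gaussianPDFReal m v) := by
  simp only [gaussianPDFReal_def]; fun_prop

lemma integral_gaussianReal_eq_integral_mul {m : ℝ} {v : ℝ≥0} (hv : v ≠ 0) (f : ℝ → ℝ) :
    ∫ x, f x ∂gaussianReal m v = ∫ x, gaussianPDFReal m v x * f x :=
  integral_gaussianReal_eq_integral_smul hv

lemma integrable_gaussianReal_iff_integrable_mul {m : ℝ} {v : ℝ≥0} (hv : v ≠ 0)
    {f : ℝ → ℝ} :
    Integrable f (gaussianReal m v) ↔ Integrable (fun x => gaussianPDFReal m v x * f x) := by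
  rw [gaussianReal_of_var_ne_zero _ hv,
    integrable_withDensity_iff_integrable_smul' (measurable_gaussianPDF _ _)
      (ae_of_all _ fun _ => gaussianPDF_lt_top)]
  simp [toReal_gaussianPDF]

lemma integrable_id_gaussianReal (m : ℝ) (v : ℝ≥0) : Integrable id (gaussianReal m v) :=
  memLp_one_iff_integrable.1 (memLp_id_gaussianReal' 1 ENNReal.one_ne_top)

lemma hasDerivAt_integral_Iic {f : ℝ → ℝ} (hf : Integrable f) (hcont : Continuous f)
    (x : ℝ) : HasDerivAt (fun y => ∫ t in Iic y, f t) (f x) x := by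
  have hsplit : (fun y => ∫ t in Iic y, f t) =
      fun y => (∫ t in Iic 0, f t) + ∫ t in (0 : ℝ)..y, f t := by
    ext y
    rw [← intervalIntegral.integral_Iic_sub_Iic hf.integrableOn hf.integrableOn]
    ring
  rw [hsplit]
  exact (intervalIntegral.integral_hasDerivAt_right hf.intervalIntegrable
    (hcont.stronglyMeasurableAtFilter _ _) hcont.continuousAt).const_add _

lemma hasDerivAt_cdf_gaussianReal (m : ℝ) {v : ℝ≥0} (hv : v ≠ 0) (x : ℝ) :
    HasDerivAt (cdf (gaussianReal m v)) (gaussianPDFReal m v x) x := by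
  have hcdf : ⇑(cdf (gaussianReal m v)) = fun y => ∫ t in Iic y, gaussianPDFReal m v t := by
    ext y
    rw [cdf_eq_real, measureReal_def, gaussianReal_apply_eq_integral _ hv,
      ENNReal.toReal_ofReal
        (setIntegral_nonneg measurableSet_Iic fun t _ => gaussianPDFReal_nonneg _ _ t)]
  rw [hcdf]
  exact hasDerivAt_integral_Iic (integrable_gaussianPDFReal m v)
    (continuous_gaussianPDFReal m v) x

lemma gaussianPDFReal_zero_one (x : ℝ) : φ x = (√(2 * π))⁻¹ * exp (-x ^ 2 / 2) := by
  simp [gaussianPDFReal]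

lemma gaussianPDFReal_zero_one_neg (x : ℝ) : φ (-x) = φ x := by
  simp [gaussianPDFReal_zero_one]

lemma gaussianPDFReal_zero_one_le_one (x : ℝ) : φ x ≤ 1 := by
  rw [gaussianPDFReal_zero_one]
  have hexp : exp (-x ^ 2 / 2) ≤ 1 := exp_le_one_iff.2 (by nlinarith [sq_nonneg x])
  have hsqrt : 1 ≤ √(2 * π) := one_le_sqrt.2 (by nlinarith [pi_gt_three])
  calc (√(2 * π))⁻¹ * exp (-x ^ 2 / 2) ≤ 1 * 1 :=
        mul_le_mul (inv_le_one_of_one_le₀ hsqrt) hexp (exp_nonneg _) zero_le_one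
    _ = 1 := one_mul 1

lemma hasDerivAt_gaussianPDFReal_zero_one (x : ℝ) : HasDerivAt φ (-x * φ x) x := by
  have hquad : HasDerivAt (fun y : ℝ => -y ^ 2 / 2) (-x) x :=
    (((hasDerivAt_id' x).fun_pow 2).fun_neg.div_const 2).congr_deriv (by norm_num; ring)
  rw [funext gaussianPDFReal_zero_one]
  exact (hquad.exp.const_mul (√(2 * π))⁻¹).congr_deriv (by ring)

lemma hasDerivAt_gaussianPDFReal_affine_mul (a b z : ℝ) :
    HasDerivAt (fun y => φ (a * y + b) * φ y)
      (-((1 + a ^ 2) * z + a * b) * (φ (a * z + b) * φ z)) z :=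
  (((hasDerivAt_gaussianPDFReal_zero_one _).comp z ((hasDerivAt_const_mul a).add_const b)).mul
    (hasDerivAt_gaussianPDFReal_zero_one z)).congr_deriv (by simp only [Function.comp]; ring)

lemma integral_gaussianPDFReal_affine_sq (a b : ℝ) :
    ∫ z, φ (a * z + b) ^ 2 ∂𝒩 =
      exp (-b ^ 2 / (1 + 2 * a ^ 2)) / (2 * π * √(1 + 2 * a ^ 2)) := by
  set c := 1 + 2 * a ^ 2
  have hcpos : 0 < c := by positivity
  have hpoint : ∀ z, φ z * φ (a * z + b) ^ 2 =
      (√(2 * π))⁻¹ ^ 3 * exp (-b ^ 2 / c) * exp (-(c / 2) * (z + 2 * a * b / c) ^ 2) := by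
    intro z
    have hsquare : exp (-z ^ 2 / 2) * exp (-(a * z + b) ^ 2 / 2) ^ 2 =
        exp (-b ^ 2 / c) * exp (-(c / 2) * (z + 2 * a * b / c) ^ 2) := by
      rw [sq (exp _), ← exp_add, ← exp_add, ← exp_add]
      congr 1
      field_simp
      ring
    simp only [gaussianPDFReal_zero_one]
    linear_combination (√(2 * π))⁻¹ ^ 3 * hsquare
  have hq2 : √(2 * π) ^ 2 = 2 * π := sq_sqrt (by positivity)
  calc ∫ z, φ (a * z + b) ^ 2 ∂𝒩
      = (√(2 * π))⁻¹ ^ 3 * exp (-b ^ 2 / c) *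
          ∫ z, exp (-(c / 2) * (z + 2 * a * b / c) ^ 2) := by
        rw [integral_gaussianReal_eq_integral_mul one_ne_zero,
          integral_congr_ae (ae_of_all _ hpoint), integral_const_mul]
    _ = (√(2 * π))⁻¹ ^ 3 * exp (-b ^ 2 / c) * √(π / (c / 2)) := by
        rw [integral_add_right_eq_self (fun z => exp (-(c / 2) * z ^ 2)), integral_gaussian]
    _ = exp (-b ^ 2 / c) / (2 * π * √c) := by
        rw [div_div_eq_mul_div, mul_comm π 2, sqrt_div' _ hcpos.le]
        field_simp
        rw [hq2]

lemma sgn_mul_of_pos {σ : ℝ} (hσ : 0 < σ) (y : ℝ) : sgn (σ * y) = sgn y := by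
  simp only [sgn, mul_nonneg_iff_of_pos_left hσ]

lemma sgn_add_eq_one_sub_indicator (x z : ℝ) :
    sgn (x + z) = 1 - 2 * (Iio (-x)).indicator 1 z := by
  by_cases hz : z ∈ Iio (-x)
  · rw [indicator_of_mem hz, sgn, if_neg (by rw [mem_Iio] at hz; linarith)]; norm_num
  · rw [indicator_of_notMem hz, sgn, if_pos (by rw [mem_Iio] at hz; linarith)]; norm_num

noncomputable def sgnMean (x : ℝ) : ℝ := ∫ z, sgn (x + z) ∂𝒩

lemma sgnMean_eq (x : ℝ) : sgnMean x = 1 - 2 * cdf 𝒩 (-x) := by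
  have := nullSingletonClass_gaussianReal (μ := 0) one_ne_zero
  simp_rw [sgnMean, sgn_add_eq_one_sub_indicator]
  rw [integral_sub (integrable_const 1)
      (((integrable_const 1).indicator measurableSet_Iio).const_mul 2),
    integral_const_mul, integral_indicator_one measurableSet_Iio, cdf_eq_real,
    measureReal_congr Iio_ae_eq_Iic]
  simp

lemma integral_sgn_add_mul (c : ℝ) {σ : ℝ} (hσ : 0 < σ) :
    ∫ z, sgn (c + σ * z) ∂𝒩 = sgnMean (c / σ) := by
  refine integral_congr_ae (ae_of_all _ fun z => ?_)
  dsimp only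
  rw [← sgn_mul_of_pos hσ (c / σ + z), mul_add, mul_div_cancel₀ _ hσ.ne']

lemma abs_sgnMean_le_one (x : ℝ) : |sgnMean x| ≤ 1 := by
  rw [sgnMean_eq, abs_le]
  constructor <;> linarith [cdf_nonneg 𝒩 (-x), cdf_le_one 𝒩 (-x)]

lemma abs_sgnMean_mul_gaussianPDFReal_le_one (x : ℝ) : |sgnMean x * φ x| ≤ 1 := by
  rw [abs_mul, abs_of_nonneg (gaussianPDFReal_nonneg 0 1 x)]
  exact mul_le_one₀ (abs_sgnMean_le_one x) (gaussianPDFReal_nonneg 0 1 x)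
    (gaussianPDFReal_zero_one_le_one x)

lemma hasDerivAt_sgnMean (x : ℝ) : HasDerivAt sgnMean (2 * φ x) x := by
  rw [funext sgnMean_eq]
  have hcdf := (hasDerivAt_cdf_gaussianReal 0 one_ne_zero (-x)).comp x (hasDerivAt_neg x)
  exact ((hcdf.const_mul 2).const_sub 1).congr_deriv
    (by rw [gaussianPDFReal_zero_one_neg]; ring)

@[fun_prop]
lemma continuous_sgnMean : Continuous sgnMean :=
  continuous_iff_continuousAt.2 fun x => (hasDerivAt_sgnMean x).continuousAt

lemma hasDerivAt_sgnMean_sq (x : ℝ) :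
    HasDerivAt (fun y => sgnMean y ^ 2) (4 * (sgnMean x * φ x)) x :=
  ((hasDerivAt_sgnMean x).pow 2).congr_deriv (by ring)

lemma differentiable_sgnMean_sq : Differentiable ℝ fun y => sgnMean y ^ 2 :=
  fun x => (hasDerivAt_sgnMean_sq x).differentiableAt

lemma nnnorm_deriv_sgnMean_sq_le (x : ℝ) : ‖deriv (fun y => sgnMean y ^ 2) x‖₊ ≤ 4 := by
  rw [(hasDerivAt_sgnMean_sq x).deriv, ← NNReal.coe_le_coe, coe_nnnorm, norm_mul,
    Real.norm_eq_abs, Real.norm_eq_abs, abs_of_pos (by norm_num : (0 : ℝ) < 4)]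
  simpa using mul_le_mul_of_nonneg_left (abs_sgnMean_mul_gaussianPDFReal_le_one x) zero_le_four

section DifferentiationUnderIntegral

variable {μ : Measure ℝ} [IsFiniteMeasure μ]

lemma integrable_of_abs_le_affine (hμ : Integrable id μ) {f : ℝ → ℝ}
    (hf : AEStronglyMeasurable f μ) {A B : ℝ} (hbound : ∀ z, |f z| ≤ A + B * |z|) :
    Integrable f μ :=
  ((integrable_const A).add (hμ.abs.const_mul B)).mono' hf
    (ae_of_all _ fun z => by simpa using hbound z)

theorem hasDerivAt_integral_comp_affine (hμ : Integrable id μ) {g : ℝ → ℝ} {C : ℝ≥0}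
    (hg : Differentiable ℝ g) (hg' : ∀ x, ‖deriv g x‖₊ ≤ C) {a b a' b' : ℝ → ℝ} {s : ℝ}
    (ha : ∀ᶠ u in 𝓝 s, HasDerivAt a (a' u) u) (hb : ∀ᶠ u in 𝓝 s, HasDerivAt b (b' u) u)
    (ha' : ContinuousAt a' s) (hb' : ContinuousAt b' s) :
    HasDerivAt (fun u => ∫ z, g (a u * z + b u) ∂μ)
      (∫ z, deriv g (a s * z + b s) * (a' s * z + b' s) ∂μ) s := by
  have hlip := lipschitzWith_of_nnnorm_deriv_le hg hg'
  have hg_cont := hg.continuous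
  have hC : ∀ x, |deriv g x| ≤ C := fun x => by exact_mod_cast hg' x
  have hlocal : ∀ᶠ u in 𝓝 s, (HasDerivAt a (a' u) u ∧ HasDerivAt b (b' u) u) ∧
      |a' u| < |a' s| + 1 ∧ |b' u| < |b' s| + 1 :=
    (ha.and hb).and (((continuous_abs.continuousAt.comp ha').eventually_lt continuousAt_const
      (lt_add_one _)).and ((continuous_abs.continuousAt.comp hb').eventually_lt
      continuousAt_const (lt_add_one _)))
  have hF_int : Integrable (fun z => g (a s * z + b s)) μ := by
    refine integrable_of_abs_le_affine hμ (by fun_prop : Continuous _).aestronglyMeasurable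
      (A := |g 0| + C * |b s|) (B := C * |a s|) fun z => ?_
    have hg_lin : |g (a s * z + b s) - g 0| ≤ C * |a s * z + b s| := by
      simpa [Real.dist_eq] using hlip.dist_le_mul (a s * z + b s) 0
    have := abs_add_le (a s * z) (b s)
    rw [abs_mul] at this
    nlinarith [abs_sub_abs_le_abs_sub (g (a s * z + b s)) (g 0), C.2]
  have hF'_meas :
      AEStronglyMeasurable (fun z => deriv g (a s * z + b s) * (a' s * z + b' s)) μ :=
    (((measurable_deriv g).comp (by fun_prop)).mul (by fun_prop)).aestronglyMeasurable
  refine (hasDerivAt_integral_of_dominated_loc_of_deriv_le (F := fun u z => g (a u * z + b u))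
    (F' := fun u z => deriv g (a u * z + b u) * (a' u * z + b' u))
    (bound := fun z => C * ((|a' s| + 1) * |z| + (|b' s| + 1))) hlocal
    (Eventually.of_forall fun u => (by fun_prop : Continuous _).aestronglyMeasurable) hF_int
    hF'_meas ?_ ?_ ?_).2
  · refine ae_of_all _ fun z u ⟨_, hau, hbu⟩ => ?_
    rw [norm_mul, Real.norm_eq_abs, Real.norm_eq_abs]
    have := abs_add_le (a' u * z) (b' u)
    rw [abs_mul] at this
    gcongr
    · exact hC _
    · nlinarith [abs_nonneg z]
  · exact ((hμ.abs.const_mul _).add (integrable_const _)).const_mul _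
  · refine ae_of_all _ fun z u ⟨⟨hau, hbu⟩, _⟩ => ?_
    exact (hg _).hasDerivAt.comp u ((hau.mul_const z).add hbu)

end DifferentiationUnderIntegral

lemma integral_sgnMean_mul_gaussianPDFReal_affine (a b : ℝ) :
    ∫ z, sgnMean (a * z + b) * φ (a * z + b) * ((1 + a ^ 2) * z + a * b) ∂𝒩 =
      2 * a * ∫ z, φ (a * z + b) ^ 2 ∂𝒩 := by
  -- integrate over ℝ the derivative of `sgnMean (a z + b) * φ (a z + b) * φ z`
  have hderiv : ∀ z, HasDerivAt (fun y => sgnMean (a * y + b) * (φ (a * y + b) * φ y))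
      (φ z * (2 * a * φ (a * z + b) ^ 2 -
        sgnMean (a * z + b) * φ (a * z + b) * ((1 + a ^ 2) * z + a * b))) z := fun z =>
    (((hasDerivAt_sgnMean _).comp z ((hasDerivAt_const_mul a).add_const b)).mul
      (hasDerivAt_gaussianPDFReal_affine_mul a b z)).congr_deriv
      (by simp only [Function.comp]; ring)
  have hsq : Integrable (fun z => φ (a * z + b) ^ 2) 𝒩 :=
    Integrable.of_bound (by fun_prop : Continuous _).aestronglyMeasurable 1
      (ae_of_all _ fun z => by
        rw [Real.norm_eq_abs, abs_pow, abs_of_nonneg (gaussianPDFReal_nonneg 0 1 _)]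
        exact pow_le_one₀ (gaussianPDFReal_nonneg 0 1 _) (gaussianPDFReal_zero_one_le_one _))
  have hlin : Integrable
      (fun z => sgnMean (a * z + b) * φ (a * z + b) * ((1 + a ^ 2) * z + a * b)) 𝒩 := by
    refine integrable_of_abs_le_affine (integrable_id_gaussianReal 0 1)
      (by fun_prop : Continuous _).aestronglyMeasurable (A := |a * b|) (B := 1 + a ^ 2)
      fun z => ?_
    rw [abs_mul]
    have h1 := abs_sgnMean_mul_gaussianPDFReal_le_one (a * z + b)
    have h2 : |(1 + a ^ 2) * z + a * b| ≤ |a * b| + (1 + a ^ 2) * |z| := by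
      have := abs_add_le ((1 + a ^ 2) * z) (a * b)
      rw [abs_mul, abs_of_pos (by positivity : (0 : ℝ) < 1 + a ^ 2)] at this
      linarith
    nlinarith [abs_nonneg ((1 + a ^ 2) * z + a * b),
      abs_nonneg (sgnMean (a * z + b) * φ (a * z + b))]
  have hbounded : Integrable (fun z => sgnMean (a * z + b) * φ (a * z + b)) 𝒩 :=
    Integrable.of_bound (by fun_prop : Continuous _).aestronglyMeasurable 1
      (ae_of_all _ fun z => abs_sgnMean_mul_gaussianPDFReal_le_one _)
  have hzero := integral_eq_zero_of_hasDerivAt_of_integrable hderiv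
    ((integrable_gaussianReal_iff_integrable_mul one_ne_zero).1
      ((hsq.const_mul (2 * a)).sub hlin))
    (((integrable_gaussianReal_iff_integrable_mul one_ne_zero).1 hbounded).congr
      (ae_of_all _ fun z => by ring))
  rw [← integral_gaussianReal_eq_integral_mul one_ne_zero, integral_sub (hsq.const_mul _) hlin,
    integral_const_mul] at hzero
  linarith

lemma integral_deriv_sgnMean_sq_mul_affine (a b k : ℝ) :
    ∫ z, deriv (fun y => sgnMean y ^ 2) (a * z + b) * (k * ((1 + a ^ 2) * z + a * b)) ∂𝒩 =
      8 * k * a * exp (-b ^ 2 / (1 + 2 * a ^ 2)) / (2 * π * √(1 + 2 * a ^ 2)) := by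
  simp_rw [(hasDerivAt_sgnMean_sq _).deriv]
  calc ∫ z, 4 * (sgnMean (a * z + b) * φ (a * z + b)) * (k * ((1 + a ^ 2) * z + a * b)) ∂𝒩
      = 4 * k * ∫ z, sgnMean (a * z + b) * φ (a * z + b) * ((1 + a ^ 2) * z + a * b) ∂𝒩 := by
        rw [← integral_const_mul]; congr 1; ext z; ring
    _ = _ := by
        rw [integral_sgnMean_mul_gaussianPDFReal_affine, integral_gaussianPDFReal_affine_sq]
        ring

lemma hasDerivAt_sqrt_div_sqrt_one_sub {u : ℝ} (hu0 : 0 < u) (hu1 : u < 1) :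
    HasDerivAt (fun v => √v / √(1 - v)) (1 / (2 * √u * (1 - u) * √(1 - u))) u := by
  have h1u : 0 < 1 - u := by linarith
  have hr := ((hasDerivAt_id' u).const_sub 1).sqrt h1u.ne'
  refine ((hasDerivAt_sqrt hu0.ne').div hr (sqrt_pos.2 h1u).ne').congr_deriv ?_
  have ht2 := sq_sqrt hu0.le
  have hr2 := sq_sqrt h1u.le
  field_simp
  rw [hr2, ht2]; ring

lemma hasDerivAt_div_sqrt_one_sub (c : ℝ) {u : ℝ} (hu1 : u < 1) :
    HasDerivAt (fun v => c / √(1 - v)) (c / (2 * (1 - u) * √(1 - u))) u := by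
  have h1u : 0 < 1 - u := by linarith
  have hr := ((hasDerivAt_id' u).const_sub 1).sqrt h1u.ne'
  refine ((hasDerivAt_const u c).div hr (sqrt_pos.2 h1u).ne').congr_deriv ?_
  have hr2 := sq_sqrt h1u.le
  field_simp
  rw [hr2]; ring

lemma integral_sgn_add_sqrt_mul_add_sqrt_mul (h z' : ℝ) {u : ℝ} (hu : u < 1) :
    ∫ z, sgn (h + √u * z' + √(1 - u) * z) ∂𝒩 =
      sgnMean (√u / √(1 - u) * z' + h / √(1 - u)) := by
  rw [integral_sgn_add_mul _ (sqrt_pos.2 (sub_pos.2 hu)), add_div, add_comm, mul_div_right_comm]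

lemma integral_deriv_sgnMean_sq_mul_sqrt (h : ℝ) {s : ℝ} (hs0 : 0 < s) (hs1 : s < 1) :
    ∫ z, deriv (fun y => sgnMean y ^ 2) (√s / √(1 - s) * z + h / √(1 - s)) *
        (1 / (2 * √s * (1 - s) * √(1 - s)) * z + h / (2 * (1 - s) * √(1 - s))) ∂𝒩 =
      2 / (π * √(1 - s ^ 2)) * exp (-h ^ 2 / (1 + s)) := by
  have h1s : 0 < 1 - s := by linarith
  have hr : 0 < √(1 - s) := sqrt_pos.2 h1s
  have ht2 : √s ^ 2 = s := sq_sqrt hs0.le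
  have hr2 : √(1 - s) ^ 2 = 1 - s := sq_sqrt h1s.le
  have hslope : ∀ z, 1 / (2 * √s * (1 - s) * √(1 - s)) * z + h / (2 * (1 - s) * √(1 - s)) =
      1 / (2 * √s * √(1 - s)) *
        ((1 + (√s / √(1 - s)) ^ 2) * z + √s / √(1 - s) * (h / √(1 - s))) := by
    intro z
    field_simp
    rw [ht2, hr2]
    ring
  have hvar : 1 + 2 * (√s / √(1 - s)) ^ 2 = (1 + s) / √(1 - s) ^ 2 := by
    field_simp; rw [ht2, hr2]; ring
  simp_rw [hslope]
  rw [integral_deriv_sgnMean_sq_mul_affine, hvar, sqrt_div' _ (sq_nonneg _), sqrt_sq hr.le,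
    show -(h / √(1 - s)) ^ 2 / ((1 + s) / √(1 - s) ^ 2) = -h ^ 2 / (1 + s) by field_simp,
    show 1 - s ^ 2 = (1 - s) * (1 + s) by ring, sqrt_mul h1s.le]
  field_simp
  ring

end GaussianSignCorrelation

open GaussianSignCorrelation

theorem stmt_8 (h s : ℝ) (hs0 : 0 < s) (hs1 : s < 1) :
    HasDerivAt
      (fun u => ∫ z', (∫ z, sgn (h + Real.sqrt u * z' + Real.sqrt (1 - u) * z)
          ∂(gaussianReal 0 1)) ^ 2 ∂(gaussianReal 0 1))
      ((2 / (Real.pi * Real.sqrt (1 - s ^ 2))) * Real.exp (-h ^ 2 / (1 + s))) s := by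
  have h1s : 0 < 1 - s := by linarith
  have ht : 0 < √s := sqrt_pos.2 hs0
  have hr : 0 < √(1 - s) := sqrt_pos.2 h1s
  have hinner : (fun u => ∫ z', (∫ z, sgn (h + √u * z' + √(1 - u) * z) ∂gaussianReal 0 1) ^ 2
      ∂gaussianReal 0 1) =ᶠ[𝓝 s]
      fun u => ∫ z', sgnMean (√u / √(1 - u) * z' + h / √(1 - u)) ^ 2 ∂gaussianReal 0 1 := by
    filter_upwards [gt_mem_nhds hs1] with u hu
    simp_rw [integral_sgn_add_sqrt_mul_add_sqrt_mul h _ hu]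
  have hderiv := hasDerivAt_integral_comp_affine (integrable_id_gaussianReal 0 1)
    differentiable_sgnMean_sq nnnorm_deriv_sgnMean_sq_le
    (eventually_of_mem (Ioo_mem_nhds hs0 hs1) fun u hu =>
      hasDerivAt_sqrt_div_sqrt_one_sub hu.1 hu.2)
    (eventually_of_mem (gt_mem_nhds hs1) fun u hu => hasDerivAt_div_sqrt_one_sub h hu)
    (continuousAt_const.div (by fun_prop) (by positivity))
    (continuousAt_const.div (by fun_prop) (by positivity))
  exact (hderiv.congr_of_eventuallyEq hinner).congr_deriv
    (integral_deriv_sgnMean_sq_mul_sqrt h hs0 hs1)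
end

section
/- Let K be a metric space, I ⊂ ℝ an interval open on the right, and f : K × I → ℝ. Define f₀(y) = sup_{a∈K} f(a,y). Suppose there is a continuous function a : I → K with f₀(y) = f(a(y), y) for all y, and that the partial derivative ∂_y f exists and is continuous on K × I. Then f₀ is right-differentiable at every y ∈ I with right derivative ∂_y f(a(y), y). -/
/-- Chen's envelope-type lemma: if the sup `f₀(y) = sup_{a∈K} f(a,y)` is attained
at a continuously varying maximizer `a(y)` and `∂_y f` exists and is continuous,
then `f₀` is right-differentiable with derivative `∂_y f(a(y), y)`. -/
theorem stmt_12 {K : Type*} [MetricSpace K] (c d : ℝ)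
    (I : Set ℝ) (hI : I = Set.Ico c d)
    (f : K → ℝ → ℝ) (fy : K → ℝ → ℝ) (f₀ : ℝ → ℝ) (a : ℝ → K)
    (ha_cont : ContinuousOn a I)
    (hmax : ∀ y ∈ I, IsGreatest {v : ℝ | ∃ k : K, v = f k y} (f₀ y))
    (hattain : ∀ y ∈ I, f₀ y = f (a y) y)
    (hderiv : ∀ k : K, ∀ y ∈ I, HasDerivWithinAt (fun y' => f k y') (fy k y) I y)
    (hcont : ContinuousOn (fun p : K × ℝ => fy p.1 p.2) (Set.univ ×ˢ I)) :
    ∀ y ∈ I, HasDerivWithinAt f₀ (fy (a y) y) (Set.Ici y) y := by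
  intro y hy
  have hyI : y ∈ Set.Ico c d := by rwa [hI] at hy
  obtain ⟨hcy, hyd⟩ := hyI
  set L := fy (a y) y with hL
  rw [hasDerivWithinAt_iff_tendsto_slope]
  have hset : Set.Ici y \ {y} = Set.Ioi y := by
    ext x
    simp only [Set.mem_diff, Set.mem_Ici, Set.mem_singleton_iff, Set.mem_Ioi]
    constructor
    · rintro ⟨h1, h2⟩; exact lt_of_le_of_ne h1 (Ne.symm h2)
    · intro h; exact ⟨h.le, h.ne'⟩
  rw [hset, ← nhdsWithin_Ioo_eq_nhdsGT hyd]
  rw [Metric.tendsto_nhdsWithin_nhds]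
  intro ε hε
  -- continuity of fy at (a y, y)
  have hcw : ContinuousWithinAt (fun p : K × ℝ => fy p.1 p.2) (Set.univ ×ˢ I) (a y, y) :=
    hcont (a y, y) ⟨Set.mem_univ _, hy⟩
  have hball : {p : K × ℝ | |fy p.1 p.2 - L| < ε} ∈ nhdsWithin (a y, y) (Set.univ ×ˢ I) := by
    have := hcw (Metric.ball_mem_nhds L hε)
    simpa [Metric.ball, Real.dist_eq] using this
  obtain ⟨U, hUo, hUm, hUsub⟩ := mem_nhdsWithin.mp hball
  obtain ⟨r, hr, hrsub⟩ := Metric.isOpen_iff.mp hUo _ hUm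
  -- continuity of a at y
  have haw : ContinuousWithinAt a I y := ha_cont y hy
  rw [Metric.continuousWithinAt_iff] at haw
  obtain ⟨δ₂, hδ₂, hδ₂sub⟩ := haw r hr
  have key : ∀ k t, dist k (a y) < r → t ∈ I → |t - y| < r → |fy k t - L| < ε := by
    intro k t hk ht hty
    have hmem : (k, t) ∈ Metric.ball ((a y, y) : K × ℝ) r := by
      rw [Metric.mem_ball, Prod.dist_eq]
      exact max_lt hk (by rwa [Real.dist_eq])
    exact hUsub ⟨hrsub hmem, Set.mem_univ _, ht⟩
  refine ⟨min r δ₂, lt_min hr hδ₂, ?_⟩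
  intro x hx hdx
  obtain ⟨hyx, hxd⟩ := hx
  have hxI : x ∈ I := by rw [hI]; exact ⟨hcy.trans hyx.le, hxd⟩
  have hxy : 0 < x - y := sub_pos.mpr hyx
  have hdxy : |x - y| < min r δ₂ := by rwa [Real.dist_eq] at hdx
  -- MVT for each k
  have mvt : ∀ k : K, ∃ ξ ∈ Set.Ioo y x, fy k ξ = (f k x - f k y) / (x - y) := by
    intro k
    apply exists_hasDerivAt_eq_slope (f k) (fy k) hyx
    · intro t ht
      have htI : t ∈ I := by
        rw [hI]; exact ⟨hcy.trans ht.1, lt_of_le_of_lt ht.2 hxd⟩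
      exact ((hderiv k t htI).continuousWithinAt).mono
        (by rw [hI]; intro s hs; exact ⟨hcy.trans hs.1, lt_of_le_of_lt hs.2 hxd⟩)
    · intro t ht
      have htI : t ∈ I := by
        rw [hI]; exact ⟨hcy.trans ht.1.le, ht.2.trans hxd⟩
      refine (hderiv k t htI).hasDerivAt ?_
      have : Set.Ioo c d ∈ nhds t := isOpen_Ioo.mem_nhds ⟨hcy.trans_lt ht.1, ht.2.trans hxd⟩
      exact Filter.mem_of_superset this (by rw [hI]; exact Set.Ioo_subset_Ico_self)
  -- bounds on ξ
  have hξ_ok : ∀ ξ ∈ Set.Ioo y x, ξ ∈ I ∧ |ξ - y| < r := by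
    intro ξ hξ
    constructor
    · rw [hI]; exact ⟨hcy.trans hξ.1.le, hξ.2.trans hxd⟩
    · rw [abs_of_pos (sub_pos.mpr hξ.1)]
      calc ξ - y < x - y := by linarith [hξ.2]
        _ ≤ |x - y| := le_abs_self _
        _ < min r δ₂ := hdxy
        _ ≤ r := min_le_left _ _
  -- lower bound using k = a y
  obtain ⟨ξ₁, hξ₁, hξ₁eq⟩ := mvt (a y)
  obtain ⟨hξ₁I, hξ₁r⟩ := hξ_ok ξ₁ hξ₁
  have hlow : L - ε < (f (a y) x - f (a y) y) / (x - y) := by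
    rw [← hξ₁eq]
    have := key (a y) ξ₁ (by simpa using hr) hξ₁I hξ₁r
    have := abs_lt.mp this
    linarith [this.1]
  -- upper bound using k = a x
  obtain ⟨ξ₂, hξ₂, hξ₂eq⟩ := mvt (a x)
  obtain ⟨hξ₂I, hξ₂r⟩ := hξ_ok ξ₂ hξ₂
  have hax : dist (a x) (a y) < r := by
    apply hδ₂sub hxI
    calc dist x y < min r δ₂ := hdx
      _ ≤ δ₂ := min_le_right _ _
  have hhigh : (f (a x) x - f (a x) y) / (x - y) < L + ε := by
    rw [← hξ₂eq]
    have := abs_lt.mp (key (a x) ξ₂ hax hξ₂I hξ₂r)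
    linarith [this.2]
  -- relate slope of f₀ to these
  have h1 : f₀ x - f₀ y ≤ f (a x) x - f (a x) y := by
    have e1 : f₀ x = f (a x) x := hattain x hxI
    have e2 : f (a x) y ≤ f₀ y := (hmax y hy).2 ⟨a x, rfl⟩
    linarith
  have h2 : f (a y) x - f (a y) y ≤ f₀ x - f₀ y := by
    have e1 : f₀ y = f (a y) y := hattain y hy
    have e2 : f (a y) x ≤ f₀ x := (hmax x hxI).2 ⟨a y, rfl⟩
    linarith
  have hslope : slope f₀ y x = (f₀ x - f₀ y) / (x - y) := by
    rw [slope_def_field]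
  rw [Real.dist_eq, hslope, abs_lt]
  constructor
  · have : (f (a y) x - f (a y) y) / (x - y) ≤ (f₀ x - f₀ y) / (x - y) :=
      div_le_div_of_nonneg_right h2 hxy.le
    linarith
  · have : (f₀ x - f₀ y) / (x - y) ≤ (f (a x) x - f (a x) y) / (x - y) :=
      div_le_div_of_nonneg_right h1 hxy.le
    linarith
end
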